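/- If 𝒜 is a compact IRU-set of strictly positive square matrices, Ã ∈ 𝒜 attains the maximum spectral radius over 𝒜, and ṽ > 0 is the Perron eigenvector of Ã for the eigenvalue ρ(Ã), then A·ṽ ≤ ρ(Ã)·ṽ componentwise for every A ∈ 𝒜. -/

import Mathlib

/-!
Suppose `(A ṽ)ᵢ > ρ ṽᵢ` with `ρ = ρ(Ã)`. Replacing row `i` of `Ã` by row `i` of `A`
gives `B ∈ 𝒜` with `B ṽ ≥ ρ ṽ`, strictly in coordinate `i`. As `B` is positive,
`w = B ṽ > 0` satisfies `B w > ρ w` in every coordinate, hence `B w ≥ c w` for some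
`c > ρ`. Iterating, `‖Bᵏ‖ ≳ cᵏ`, so Gelfand's formula gives `ρ(B) ≥ c > ρ(Ã)`,
contradicting maximality.
-/

open Matrix

/-- Spectral radius of a real square matrix: the maximum modulus of its complex eigenvalues. -/
noncomputable def specRad {N : ℕ} (A : Matrix (Fin N) (Fin N) ℝ) : ℝ :=
  sSup ((fun z : ℂ => ‖z‖) '' spectrum ℂ (A.map (Complex.ofReal)))

/-- The IRU-set (independent row uncertainty set) determined by row sets `rows i ⊆ ℝ^M`:
all `N × M` matrices whose `i`-th row belongs to `rows i`. -/
def IRU {N M : ℕ} (rows : Fin N → Set (Fin M → ℝ)) : Set (Matrix (Fin N) (Fin M) ℝ) :=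
  {A | ∀ i, A i ∈ rows i}

open Filter Topology

section OrderedRing

variable {m n R : Type*} [Fintype n] [CommSemiring R] [PartialOrder R]

lemma mulVec_le_mulVec_of_nonneg [IsOrderedRing R] {B : Matrix m n R}
    (hB : ∀ i j, 0 ≤ B i j) {x y : n → R} (hxy : x ≤ y) : B *ᵥ x ≤ B *ᵥ y :=
  fun i => dotProduct_le_dotProduct_of_nonneg_left hxy (hB i)

lemma pow_smul_le_pow_mulVec [IsOrderedRing R] [DecidableEq n] {B : Matrix n n R}
    (hB : ∀ i j, 0 ≤ B i j) {c : R} (hc : 0 ≤ c) {v : n → R} (hcv : c • v ≤ B *ᵥ v) (k : ℕ) :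
    c ^ k • v ≤ (B ^ k) *ᵥ v := by
  induction k with
  | zero => simp
  | succ k ih =>
    calc c ^ (k + 1) • v = c ^ k • (c • v) := by rw [pow_succ, mul_smul]
      _ ≤ c ^ k • (B *ᵥ v) := smul_le_smul_of_nonneg_left hcv (pow_nonneg hc k)
      _ = B *ᵥ (c ^ k • v) := (mulVec_smul B _ v).symm
      _ ≤ B *ᵥ ((B ^ k) *ᵥ v) := mulVec_le_mulVec_of_nonneg hB ih
      _ = (B ^ (k + 1)) *ᵥ v := by rw [mulVec_mulVec, pow_succ']

lemma mulVec_pos_of_pos [IsStrictOrderedRing R] {B : Matrix m n R} (hB : ∀ i j, 0 < B i j)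
    {x : n → R} (hx : 0 ≤ x) {k : n} (hk : 0 < x k) (i : m) : 0 < (B *ᵥ x) i :=
  Finset.sum_pos' (fun j _ => mul_nonneg (hB i j).le (hx j))
    ⟨k, Finset.mem_univ k, mul_pos (hB i k) hk⟩

end OrderedRing

lemma exists_gt_forall_mul_lt {ι : Type*} [Finite ι] {r : ℝ} {w u : ι → ℝ}
    (h : ∀ j, r * w j < u j) : ∃ c > r, ∀ j, c * w j < u j := by
  have : ∀ᶠ c in 𝓝 r, ∀ j, c * w j < u j := eventually_all.2 fun j =>
    (continuous_id.mul continuous_const).continuousAt.eventually_lt continuousAt_const (h j)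
  obtain ⟨c, hc, hr⟩ :=
    ((this.filter_mono nhdsWithin_le_nhds).and self_mem_nhdsWithin).exists (f := 𝓝[>] r)
  exact ⟨c, hr, hc⟩

lemma ofReal_le_spectralRadius_of_mul_pow_le_norm_pow {A : Type*} [NormedRing A]
    [NormedAlgebra ℂ A] [CompleteSpace A] {a : A} {K c : ℝ} (hK : 0 < K) (hc : 0 ≤ c)
    (h : ∀ k : ℕ, K * c ^ k ≤ ‖a ^ k‖) : ENNReal.ofReal c ≤ spectralRadius ℂ a := by
  have hroot : Tendsto (fun k : ℕ => K ^ (1 / k : ℝ) * c) atTop (𝓝 c) := by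
    simpa using ((Real.continuousAt_const_rpow hK.ne').tendsto.comp
      (tendsto_const_div_atTop_nhds_zero_nat 1)).mul_const c
  refine le_of_tendsto_of_tendsto ((ENNReal.continuous_ofReal.tendsto c).comp hroot)
    (spectrum.pow_norm_pow_one_div_tendsto_nhds_spectralRadius a)
    (eventually_ne_atTop 0 |>.mono fun k hk => ENNReal.ofReal_le_ofReal ?_)
  calc K ^ (1 / k : ℝ) * c = (K * c ^ k) ^ (1 / k : ℝ) := by
        rw [Real.mul_rpow hK.le (by positivity), one_div, Real.pow_rpow_inv_natCast hc hk]
    _ ≤ ‖a ^ k‖ ^ (1 / k : ℝ) := by gcongr; exact h k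

lemma specRad_nonneg {N : ℕ} (A : Matrix (Fin N) (Fin N) ℝ) : 0 ≤ specRad A :=
  Real.sSup_nonneg (by rintro _ ⟨z, -, rfl⟩; exact norm_nonneg z)

lemma spectralRadius_map_ofReal_le {N : ℕ} (A : Matrix (Fin N) (Fin N) ℝ) :
    spectralRadius ℂ (A.map Complex.ofReal) ≤ ENNReal.ofReal (specRad A) := by
  refine iSup₂_le fun z hz => ?_
  rw [← ENNReal.ofReal_coe_nnreal, coe_nnnorm]
  exact ENNReal.ofReal_le_ofReal <|
    le_csSup ((Matrix.finite_spectrum _).image _).bddAbove ⟨z, hz, rfl⟩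

section LinftyOpNorm

attribute [local instance] Matrix.linftyOpNormedRing Matrix.linftyOpNormedAlgebra

lemma linfty_opNorm_map_ofReal {N : ℕ} (Q : Matrix (Fin N) (Fin N) ℝ) :
    ‖Q.map Complex.ofReal‖ = ‖Q‖ := by
  simp [linfty_opNorm_def, Complex.nnnorm_real]

theorem le_specRad_of_smul_le_mulVec {N : ℕ} {B : Matrix (Fin N) (Fin N) ℝ}
    (hB : ∀ i j, 0 ≤ B i j) {c : ℝ} (hc : 0 ≤ c) {v : Fin N → ℝ} (hcv : c • v ≤ B *ᵥ v)
    {i : Fin N} (hvi : 0 < v i) : c ≤ specRad B := by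
  have : CompleteSpace (Matrix (Fin N) (Fin N) ℂ) := FiniteDimensional.complete ℂ _
  have hv : 0 < ‖v‖ := hvi.trans_le ((Real.le_norm_self _).trans (norm_le_pi_norm v i))
  have hgrowth : ∀ k : ℕ, v i / ‖v‖ * c ^ k ≤ ‖B.map Complex.ofReal ^ k‖ := fun k =>
    calc v i / ‖v‖ * c ^ k = (c ^ k • v) i / ‖v‖ := by rw [Pi.smul_apply, smul_eq_mul]; ring
      _ ≤ (B ^ k *ᵥ v) i / ‖v‖ := by gcongr; exact pow_smul_le_pow_mulVec hB hc hcv k i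
      _ ≤ ‖B ^ k *ᵥ v‖ / ‖v‖ := by
        gcongr; exact (Real.le_norm_self _).trans (norm_le_pi_norm _ i)
      _ ≤ ‖B ^ k‖ := div_le_of_le_mul₀ hv.le (norm_nonneg _) (linfty_opNorm_mulVec _ _)
      _ = ‖B.map Complex.ofReal ^ k‖ := by
        rw [← linfty_opNorm_map_ofReal]
        exact congrArg norm (Matrix.map_pow B Complex.ofRealHom k)
  have hgelfand := ofReal_le_spectralRadius_of_mul_pow_le_norm_pow (div_pos hvi hv) hc hgrowth
  exact (ENNReal.ofReal_le_ofReal_iff (specRad_nonneg B)).1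
    (hgelfand.trans (spectralRadius_map_ofReal_le B))

end LinftyOpNorm

lemma updateRow_mem_IRU {N M : ℕ} {rows : Fin N → Set (Fin M → ℝ)}
    {A : Matrix (Fin N) (Fin M) ℝ} (hA : A ∈ IRU rows) {i : Fin N} {r : Fin M → ℝ}
    (hr : r ∈ rows i) : A.updateRow i r ∈ IRU rows := by
  intro j
  rcases eq_or_ne j i with rfl | hj
  · simpa using hr
  · simpa [updateRow_ne hj] using hA j

theorem stmt13_general {N : ℕ} (rows : Fin N → Set (Fin N → ℝ))
    (hpos : ∀ i, ∀ a ∈ rows i, ∀ j, 0 < a j)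
    (Atil : Matrix (Fin N) (Fin N) ℝ) (hAtil : Atil ∈ IRU rows)
    (hmax : ∀ A ∈ IRU rows, specRad A ≤ specRad Atil)
    (vtil : Fin N → ℝ) (hvpos : ∀ i, 0 < vtil i)
    (hev : Atil.mulVec vtil = specRad Atil • vtil) :
    ∀ A ∈ IRU rows, ∀ i, A.mulVec vtil i ≤ specRad Atil * vtil i := by
  intro A hA i
  by_contra! hlt
  set ρ := specRad Atil
  set B := Atil.updateRow i (A i)
  have hB : B ∈ IRU rows := updateRow_mem_IRU hAtil (hA i)
  have hBpos : ∀ j k, 0 < B j k := fun j k => hpos j _ (hB j) k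
  have hBv : B *ᵥ vtil = Function.update (ρ • vtil) i ((A *ᵥ vtil) i) := by
    rw [updateRow_mulVec, hev]; rfl
  have hgap : 0 ≤ B *ᵥ vtil - ρ • vtil := fun j => by
    rcases eq_or_ne j i with rfl | hj
    · simpa [hBv] using hlt.le
    · simp [hBv, hj]
  set w := B *ᵥ vtil
  have hwi : 0 < w i := mulVec_pos_of_pos hBpos (fun j => (hvpos j).le) (hvpos i) i
  have hBw : ∀ j, ρ * w j < (B *ᵥ w) j := by
    have := mulVec_pos_of_pos hBpos hgap (k := i) (by simpa [hBv] using hlt)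
    intro j; simpa [mulVec_sub, mulVec_smul, w] using this j
  obtain ⟨c, hρc, hcw⟩ := exists_gt_forall_mul_lt hBw
  have hcB : c ≤ specRad B := le_specRad_of_smul_le_mulVec (fun j k => (hBpos j k).le)
    ((specRad_nonneg Atil).trans hρc.le) (v := w) (fun j => (hcw j).le) hwi
  linarith [hmax B hB]

theorem stmt13 {N : ℕ} (rows : Fin N → Set (Fin N → ℝ))
    (hne : ∀ i, (rows i).Nonempty) (hcomp : ∀ i, IsCompact (rows i))
    (hpos : ∀ i, ∀ a ∈ rows i, ∀ j, 0 < a j)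
    (Atil : Matrix (Fin N) (Fin N) ℝ) (hAtil : Atil ∈ IRU rows)
    (hmax : ∀ A ∈ IRU rows, specRad A ≤ specRad Atil)
    (vtil : Fin N → ℝ) (hvpos : ∀ i, 0 < vtil i)
    (hev : Atil.mulVec vtil = specRad Atil • vtil) :
    ∀ A ∈ IRU rows, ∀ i, A.mulVec vtil i ≤ specRad Atil * vtil i :=
  stmt13_general rows hpos Atil hAtil hmax vtil hvpos hev
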